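/- Let F be a field and let a, b, t ∈ F and m a positive integer with a³ = −1 and b = 1 − (a−1)³. Then in F[X,Y] the identity f_{a,b,t,m}(X,Y) = −(a² + t²X^mY^m − a·t·Y^m)(a² + t²X^mY^m − a·t·X^m) holds. -/
import Mathlib


open MvPolynomial

/-- The polynomial `f_{a,b,t,m}(X, Y)` as an element of `R[X,Y]`. -/
noncomputable def fPoly (R : Type*) [CommRing R] (a b t : R) (m : ℕ) :
    MvPolynomial (Fin 2) R :=
  C a * (C t ^ 3 * X 0 ^ (2 * m) * X 1 ^ m + C t ^ 3 * X 0 ^ m * X 1 ^ (2 * m)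
      - 3 * C t ^ 2 * X 0 ^ m * X 1 ^ m + 1)
    - C b * C t ^ 2 * X 0 ^ m * X 1 ^ m
    - C t ^ 4 * X 0 ^ (2 * m) * X 1 ^ (2 * m)
    + 3 * C t ^ 2 * X 0 ^ m * X 1 ^ m - C t * X 0 ^ m - C t * X 1 ^ m

theorem statement_14 (F : Type) [Field F] (a b t : F) (m : ℕ) (hm : 0 < m)
    (ha : a ^ 3 = -1) (hb : b = 1 - (a - 1) ^ 3) :
    fPoly F a b t m =
      -((C a ^ 2 + C t ^ 2 * X 0 ^ m * X 1 ^ m - C a * C t * X 1 ^ m) *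
        (C a ^ 2 + C t ^ 2 * X 0 ^ m * X 1 ^ m - C a * C t * X 0 ^ m)) := by
  have ha' : (C a : MvPolynomial (Fin 2) F) ^ 3 = -1 := by
    rw [← map_pow, ha]; simp
  have hb' : (C b : MvPolynomial (Fin 2) F) = 1 - (C a - 1) ^ 3 := by
    rw [hb]; push_cast [map_sub, map_pow, map_one]; ring
  rw [fPoly, hb', two_mul, pow_add]
  linear_combination (C t ^ 2 * X 0 ^ m * X 1 ^ m + C a - C t * X 0 ^ m
    - C t * X 1 ^ m) * ha'
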